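/- Let λ > 0, V = λI + ΦᵀWΦ for Φ ∈ R^{s×n} and W diagonal positive definite, and let θ*, ζ ∈ appropriate spaces with Y = Φθ* + ζ and θ̂ = V^{-1}ΦᵀWY. Then for any x ∈ R^n, xᵀθ̂ − xᵀθ* = ⟨x, ΦᵀWζ⟩_{V^{-1}} − λ⟨x, θ*⟩_{V^{-1}}, and hence |xᵀθ̂ − xᵀθ*| ≤ ‖x‖_{V^{-1}}·(‖ΦᵀWζ‖_{V^{-1}} + √λ·‖θ*‖₂). -/

import Mathlib

/-!
Substituting `Y = Φθ* + ζ` and `ΦᵀWΦ = V - λI` gives `θ̂ - θ* = V⁻¹ΦᵀWζ - λV⁻¹θ*`, which is the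
identity. The first term is bounded by Cauchy–Schwarz for the semi-inner product `⟨·,·⟩_{V⁻¹}`.
For the second, `λ ‖θ*‖²_{V⁻¹} ≤ ‖θ*‖²`: writing `θ* = Vu = λu + Gu` with `G = ΦᵀWΦ ⪰ 0`, one has
`‖θ*‖² - λ⟨θ*, u⟩ = λ⟨Gu, u⟩ + ‖Gu‖² ≥ 0`.
-/

open Matrix

namespace Matrix

variable {m n : Type*}

theorem PosSemidef.posDef_smul_one_add [DecidableEq n] {G : Matrix n n ℝ} {lam : ℝ}
    (hG : G.PosSemidef) (hlam : 0 < lam) : (lam • 1 + G).PosDef := by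
  rw [smul_one_eq_diagonal]
  exact (PosDef.diagonal fun _ ↦ hlam).add_posSemidef hG

variable [Fintype m] [Fintype n]

theorem PosSemidef.abs_dotProduct_mulVec_le {M : Matrix n n ℝ} (hM : M.PosSemidef)
    (x y : n → ℝ) : |x ⬝ᵥ M *ᵥ y| ≤ √(x ⬝ᵥ M *ᵥ x) * √(y ⬝ᵥ M *ᵥ y) := by
  let := M.toSeminormedAddCommGroup hM
  let := M.toInnerProductSpace hM
  have h := abs_real_inner_le_norm x y
  rw [norm_eq_sqrt_re_inner (𝕜 := ℝ), norm_eq_sqrt_re_inner (𝕜 := ℝ)] at h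
  change |(M *ᵥ y) ⬝ᵥ star x|
    ≤ √(RCLike.re ((M *ᵥ x) ⬝ᵥ star x)) * √(RCLike.re ((M *ᵥ y) ⬝ᵥ star y)) at h
  simpa only [star_trivial, RCLike.re_to_real, dotProduct_comm _ x, dotProduct_comm _ y] using h

theorem inv_mulVec_mulVec_add_sub_eq [DecidableEq n] {R : Type*} [CommRing R]
    {A : Matrix n m R} {Φ : Matrix m n R} {lam : R} (hdet : IsUnit (lam • 1 + A * Φ).det)
    (θ : n → R) (ζ : m → R) :
    (lam • 1 + A * Φ)⁻¹ *ᵥ A *ᵥ (Φ *ᵥ θ + ζ) - θ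
      = (lam • 1 + A * Φ)⁻¹ *ᵥ A *ᵥ ζ - lam • (lam • 1 + A * Φ)⁻¹ *ᵥ θ := by
  set V := lam • 1 + A * Φ
  have hAΦ : A * Φ = V - lam • 1 := by simp [V]
  rw [mulVec_add, mulVec_mulVec, hAΦ, sub_mulVec, smul_mulVec, one_mulVec, mulVec_add,
    mulVec_sub, mulVec_mulVec, nonsing_inv_mul V hdet, one_mulVec, mulVec_smul]
  abel

variable [DecidableEq n] {G : Matrix n n ℝ} {lam : ℝ}

theorem PosSemidef.mul_dotProduct_inv_smul_one_add_mulVec_le (hG : G.PosSemidef)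
    (hlam : 0 < lam) (θ : n → ℝ) : lam * (θ ⬝ᵥ (lam • 1 + G)⁻¹ *ᵥ θ) ≤ θ ⬝ᵥ θ := by
  have hdet := (hG.posDef_smul_one_add hlam).isUnit.map detMonoidHom
  generalize hu : (lam • 1 + G)⁻¹ *ᵥ θ = u
  have hθ : θ = lam • u + G *ᵥ u := by
    have hVu : (lam • 1 + G) *ᵥ u = θ := by
      rw [← hu, mulVec_mulVec, mul_nonsing_inv _ hdet, one_mulVec]
    rwa [add_mulVec, smul_mulVec, one_mulVec, eq_comm] at hVu
  have hGu : 0 ≤ u ⬝ᵥ G *ᵥ u := by simpa using hG.dotProduct_mulVec_nonneg u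
  have hGGu : 0 ≤ (G *ᵥ u) ⬝ᵥ (G *ᵥ u) := dotProduct_self_star_nonneg _
  have key : θ ⬝ᵥ θ - lam * (θ ⬝ᵥ u)
      = lam * (u ⬝ᵥ G *ᵥ u) + (G *ᵥ u) ⬝ᵥ (G *ᵥ u) := by
    rw [hθ]
    simp only [add_dotProduct, dotProduct_add, smul_dotProduct, dotProduct_smul, smul_eq_mul,
      dotProduct_comm (G *ᵥ u) u]
    ring
  linarith [mul_nonneg hlam.le hGu]

theorem PosSemidef.mul_abs_dotProduct_inv_smul_one_add_mulVec_le (hG : G.PosSemidef)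
    (hlam : 0 < lam) (x θ : n → ℝ) :
    lam * |x ⬝ᵥ (lam • 1 + G)⁻¹ *ᵥ θ|
      ≤ √(x ⬝ᵥ (lam • 1 + G)⁻¹ *ᵥ x) * (√lam * √(θ ⬝ᵥ θ)) := by
  set V := lam • 1 + G
  have hVinv : V⁻¹.PosSemidef := (hG.posDef_smul_one_add hlam).inv.posSemidef
  calc lam * |x ⬝ᵥ V⁻¹ *ᵥ θ| ≤ lam * (√(x ⬝ᵥ V⁻¹ *ᵥ x) * √(θ ⬝ᵥ V⁻¹ *ᵥ θ)) := by
        gcongr; exact hVinv.abs_dotProduct_mulVec_le x θ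
    _ = √(x ⬝ᵥ V⁻¹ *ᵥ x) * (√lam * √(lam * (θ ⬝ᵥ V⁻¹ *ᵥ θ))) := by
        rw [Real.sqrt_mul hlam.le, ← mul_assoc √lam, Real.mul_self_sqrt hlam.le]
        ring
    _ ≤ √(x ⬝ᵥ V⁻¹ *ᵥ x) * (√lam * √(θ ⬝ᵥ θ)) := by
        gcongr; exact hG.mul_dotProduct_inv_smul_one_add_mulVec_le hlam θ

end Matrix

theorem stmt_17 (s n : ℕ) (lam : ℝ) (hlam : 0 < lam)
    (Φ : Matrix (Fin s) (Fin n) ℝ) (w : Fin s → ℝ) (hw : ∀ i, 0 < w i)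
    (θstar : Fin n → ℝ) (ζ : Fin s → ℝ) (x : Fin n → ℝ)
    (V : Matrix (Fin n) (Fin n) ℝ)
    (hV : V = lam • (1 : Matrix (Fin n) (Fin n) ℝ) +
      Φ.transpose * Matrix.diagonal w * Φ)
    (Y : Fin s → ℝ) (hY : Y = Φ *ᵥ θstar + ζ)
    (θhat : Fin n → ℝ)
    (hθ : θhat = V⁻¹ *ᵥ (Φ.transpose * Matrix.diagonal w) *ᵥ Y) :
    x ⬝ᵥ θhat - x ⬝ᵥ θstar
      = x ⬝ᵥ V⁻¹ *ᵥ ((Φ.transpose * Matrix.diagonal w) *ᵥ ζ)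
        - lam * (x ⬝ᵥ V⁻¹ *ᵥ θstar) ∧
    |x ⬝ᵥ θhat - x ⬝ᵥ θstar|
      ≤ Real.sqrt (x ⬝ᵥ V⁻¹ *ᵥ x) *
        (Real.sqrt (((Φ.transpose * Matrix.diagonal w) *ᵥ ζ) ⬝ᵥ
            V⁻¹ *ᵥ ((Φ.transpose * Matrix.diagonal w) *ᵥ ζ)) +
          Real.sqrt lam * Real.sqrt (θstar ⬝ᵥ θstar)) := by
  subst hV hY hθ
  have hG : (Φᵀ * diagonal w * Φ).PosSemidef := by
    simpa using (PosSemidef.diagonal fun i ↦ (hw i).le).conjTranspose_mul_mul_same Φ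
  have hVpd := hG.posDef_smul_one_add hlam
  have herr := congrArg (x ⬝ᵥ ·)
    (inv_mulVec_mulVec_add_sub_eq (hVpd.isUnit.map detMonoidHom) θstar ζ)
  simp only [dotProduct_sub, dotProduct_smul, smul_eq_mul] at herr
  refine ⟨herr, ?_⟩
  rw [herr]
  set V := lam • 1 + Φᵀ * diagonal w * Φ
  calc |x ⬝ᵥ V⁻¹ *ᵥ (Φᵀ * diagonal w) *ᵥ ζ - lam * (x ⬝ᵥ V⁻¹ *ᵥ θstar)|
      ≤ |x ⬝ᵥ V⁻¹ *ᵥ (Φᵀ * diagonal w) *ᵥ ζ| + lam * |x ⬝ᵥ V⁻¹ *ᵥ θstar| := by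
        exact (abs_sub _ _).trans_eq (by rw [abs_mul, abs_of_pos hlam])
    _ ≤ _ := by
        rw [mul_add]
        exact add_le_add (hVpd.inv.posSemidef.abs_dotProduct_mulVec_le _ _)
          (hG.mul_abs_dotProduct_inv_smul_one_add_mulVec_le hlam x θstar)
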